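/- arXiv:0904.1907 — 2 statements merged into one kernel-verified Lean document; each statement's English description precedes it below -/
import Mathlib

section
/- Let H ∈ ℝ^{2^n−1} be any vector (H_α) indexed by nonempty subsets α of {1,...,n} satisfying: H_α ≥ 0, H_α ≤ H_β whenever α ⊆ β, and H_α + H_β ≥ H_{α∪β} + H_{α∩β} (with H_∅ = 0). Then its average Ψ(H) = (h_1,...,h_n), where h_m = C(n,m)^{-1} Σ_{|α|=m} H_α, satisfies h_{m-1} − 2h_m + h_{m+1} ≤ 0 for m = 1,...,n (with h_0 = 0, h_{n+1} = h_n). -/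
/-!
For `|D| = k` and distinct `x, y ∉ D`, submodularity gives
`H (D ∪ {x, y}) + H D ≤ H (D ∪ {x}) + H (D ∪ {y})`. Summing over all such triples and double
counting yields a linear inequality between the sums of `H` over the layers of sizes `k`, `k + 1`,
`k + 2`; after dividing each layer sum by its binomial coefficient, the three coefficients coincide
and the inequality is the concavity of the averages. At the top layer, where `h (n + 1) = h n`,
concavity reduces to the monotonicity of the averages, which follows from that of `H`.
-/

open Finset

theorem Nat.cast_choose_succ_right_eq {n k : ℕ} (hk : k ≤ n) :
    (n.choose (k + 1) : ℝ) * (k + 1) = n.choose k * (n - k) := by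
  rw [← Nat.cast_sub hk]
  exact_mod_cast Nat.choose_succ_right_eq n k

namespace SetFunction

variable {α : Type*} [DecidableEq α] (H : Finset α → ℝ)

def IsSubmodular : Prop := ∀ s t, H (s ∪ t) + H (s ∩ t) ≤ H s + H t

theorem IsSubmodular.insert_insert_add_le {H : Finset α → ℝ} (hsub : IsSubmodular H)
    (D : Finset α) {x y : α} (hxy : x ≠ y) :
    H (insert y (insert x D)) + H D ≤ H (insert x D) + H (insert y D) := by
  have hunion : insert x D ∪ insert y D = insert y (insert x D) := by ext; simp
  have hinter : insert x D ∩ insert y D = D := by ext; simp; grind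
  simpa [hunion, hinter] using hsub (insert x D) (insert y D)

variable [Fintype α]

theorem sum_powersetCard_sum_compl_insert {M : Type*} [AddCommMonoid M] (k : ℕ)
    (f : Finset α → M) :
    ∑ D ∈ powersetCard k univ, ∑ x ∈ Dᶜ, f (insert x D) =
      (k + 1) • ∑ A ∈ powersetCard (k + 1) univ, f A := by
  have hcard : ∀ A ∈ powersetCard (k + 1) (univ : Finset α), ∑ _x ∈ A, f A = (k + 1) • f A :=
    fun A hA => by rw [sum_const, (mem_powersetCard_univ.mp hA)]
  rw [smul_sum, ← sum_congr rfl hcard, sum_sigma', sum_sigma']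
  refine sum_nbij' (fun p => ⟨insert p.2 p.1, p.2⟩) (fun q => ⟨q.1.erase q.2, q.2⟩)
    ?_ ?_ ?_ ?_ fun _ _ => rfl
  · rintro ⟨D, x⟩ hp
    simp only [mem_sigma, mem_powersetCard_univ, mem_compl] at hp ⊢
    exact ⟨by rw [card_insert_of_notMem hp.2, hp.1], mem_insert_self _ _⟩
  · rintro ⟨A, x⟩ hq
    simp only [mem_sigma, mem_powersetCard_univ, mem_compl] at hq ⊢
    exact ⟨by rw [card_erase_of_mem hq.2, hq.1, Nat.add_sub_cancel], notMem_erase _ _⟩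
  · rintro ⟨D, x⟩ hp
    simp only [mem_sigma, mem_compl] at hp
    simp [erase_insert hp.2]
  · rintro ⟨A, x⟩ hq
    simp only [mem_sigma] at hq
    simp [insert_erase hq.2]

def sumInsert (D : Finset α) : ℝ := ∑ x ∈ Dᶜ, H (insert x D)

theorem sum_sumInsert_insert_add_le (hsub : IsSubmodular H)
    (D : Finset α) :
    ∑ x ∈ Dᶜ, sumInsert H (insert x D) + #Dᶜ * (#Dᶜ - 1) * H D ≤
      2 * (#Dᶜ - 1) * sumInsert H D := by
  have hcard : ∀ x ∈ Dᶜ, ((#(Dᶜ.erase x) : ℕ) : ℝ) = #Dᶜ - 1 := fun x hx => by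
    rw [card_erase_of_mem hx, Nat.cast_pred (card_pos.mpr ⟨x, hx⟩)]
  have hsum := sum_le_sum fun x (_ : x ∈ Dᶜ) => sum_le_sum fun y (hy : y ∈ Dᶜ.erase x) =>
    hsub.insert_insert_add_le D (ne_of_mem_erase hy).symm
  have hupper : ∑ x ∈ Dᶜ, ∑ y ∈ Dᶜ.erase x, H (insert y (insert x D)) =
      ∑ x ∈ Dᶜ, sumInsert H (insert x D) := by
    simp only [sumInsert, compl_insert]
  have hlower : ∑ x ∈ Dᶜ, ∑ _y ∈ Dᶜ.erase x, H D = #Dᶜ * (#Dᶜ - 1) * H D := by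
    simp only [sum_const, nsmul_eq_mul]
    rw [sum_congr rfl fun x hx => by rw [hcard x hx]]
    simp only [sum_const, nsmul_eq_mul]; ring
  have hleft : ∑ x ∈ Dᶜ, ∑ _y ∈ Dᶜ.erase x, H (insert x D) = (#Dᶜ - 1) * sumInsert H D := by
    simp only [sum_const, nsmul_eq_mul, sumInsert, mul_sum]
    exact sum_congr rfl fun x hx => by rw [hcard x hx]
  have hright : ∑ x ∈ Dᶜ, ∑ y ∈ Dᶜ.erase x, H (insert y D) = (#Dᶜ - 1) * sumInsert H D := by
    rw [sum_congr rfl fun x hx => sum_erase_eq_sub (f := fun y => H (insert y D)) hx,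
      sum_sub_distrib, sum_const, nsmul_eq_mul, sumInsert]
    ring
  simp only [sum_add_distrib] at hsum
  linarith

def layerSum (k : ℕ) : ℝ := ∑ A ∈ powersetCard k univ, H A

noncomputable def layerAvg (k : ℕ) : ℝ := ((Fintype.card α).choose k : ℝ)⁻¹ * layerSum H k

theorem sum_sumInsert_eq_layerSum (k : ℕ) :
    ∑ D ∈ powersetCard k univ, sumInsert H D = (k + 1) * layerSum H (k + 1) := by
  have := sum_powersetCard_sum_compl_insert k H
  rw [nsmul_eq_mul] at this
  exact_mod_cast this

theorem card_compl_of_mem_powersetCard {k : ℕ} {D : Finset α} (hD : D ∈ powersetCard k univ) :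
    (#Dᶜ : ℝ) = Fintype.card α - k := by
  rw [card_compl, Nat.cast_sub (card_le_univ D), mem_powersetCard_univ.mp hD]

theorem layerSum_second_difference_le (hsub : IsSubmodular H)
    (k : ℕ) :
    (k + 1) * (k + 2) * layerSum H (k + 2) +
        (Fintype.card α - k) * (Fintype.card α - k - 1) * layerSum H k ≤
      2 * (k + 1) * (Fintype.card α - k - 1) * layerSum H (k + 1) := by
  set n : ℝ := (Fintype.card α : ℝ)
  have hsum := sum_le_sum fun D (_ : D ∈ powersetCard k univ) =>
    sum_sumInsert_insert_add_le H hsub D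
  have hupper : ∑ D ∈ powersetCard k univ, ∑ x ∈ Dᶜ, sumInsert H (insert x D) =
      (k + 1) * (k + 2) * layerSum H (k + 2) := by
    rw [sum_powersetCard_sum_compl_insert, sum_sumInsert_eq_layerSum, nsmul_eq_mul]
    push_cast; ring
  have hlower : ∑ D ∈ powersetCard k univ, #Dᶜ * (#Dᶜ - 1) * H D =
      (n - k) * (n - k - 1) * layerSum H k := by
    rw [layerSum, mul_sum]
    exact sum_congr rfl fun D hD => by rw [card_compl_of_mem_powersetCard hD]
  have hmiddle : ∑ D ∈ powersetCard k univ, 2 * (#Dᶜ - 1) * sumInsert H D =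
      2 * (k + 1) * (n - k - 1) * layerSum H (k + 1) := by
    rw [sum_congr rfl fun D hD => by rw [card_compl_of_mem_powersetCard hD], ← mul_sum,
      sum_sumInsert_eq_layerSum]
    ring
  rw [sum_add_distrib, hupper, hlower, hmiddle] at hsum
  exact hsum

theorem card_sub_mul_layerSum_le (hmono : Monotone H) (k : ℕ) :
    (Fintype.card α - k) * layerSum H k ≤ (k + 1) * layerSum H (k + 1) := by
  rw [← sum_sumInsert_eq_layerSum, layerSum, mul_sum]
  refine sum_le_sum fun D hD => ?_
  rw [← card_compl_of_mem_powersetCard hD, ← nsmul_eq_mul, ← sum_const]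
  exact sum_le_sum fun x _ => hmono (subset_insert x D)

omit [DecidableEq α] in
theorem layerSum_eq_choose_mul_layerAvg {k : ℕ} (hk : k ≤ Fintype.card α) :
    layerSum H k = (Fintype.card α).choose k * layerAvg H k := by
  have : ((Fintype.card α).choose k : ℝ) ≠ 0 := by exact_mod_cast (Nat.choose_pos hk).ne'
  rw [layerAvg, mul_inv_cancel_left₀ this]

theorem layerAvg_le_succ (hmono : Monotone H) {k : ℕ}
    (hk : k + 1 ≤ Fintype.card α) :
    layerAvg H k ≤ layerAvg H (k + 1) := by
  have hcoef := Nat.cast_choose_succ_right_eq (n := Fintype.card α) (k := k) (by omega)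
  have hpos : (0 : ℝ) < (Fintype.card α).choose k * (Fintype.card α - k) := by
    have : (k : ℝ) < Fintype.card α := by exact_mod_cast hk
    have : (0 : ℝ) < (Fintype.card α).choose k := by exact_mod_cast Nat.choose_pos (by omega)
    positivity
  have hle := card_sub_mul_layerSum_le H hmono k
  rw [layerSum_eq_choose_mul_layerAvg H (by omega), layerSum_eq_choose_mul_layerAvg H hk] at hle
  refine le_of_mul_le_mul_left ?_ hpos
  linear_combination hle + layerAvg H (k + 1) * hcoef

theorem layerAvg_second_difference_nonpos
    (hsub : IsSubmodular H) {k : ℕ} (hk : k + 2 ≤ Fintype.card α) :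
    layerAvg H k - 2 * layerAvg H (k + 1) + layerAvg H (k + 2) ≤ 0 := by
  have hcoef₀ := Nat.cast_choose_succ_right_eq (n := Fintype.card α) (k := k) (by omega)
  have hcoef₁ := Nat.cast_choose_succ_right_eq (n := Fintype.card α) (k := k + 1) (by omega)
  have hpos : (0 : ℝ) < (k + 1) * (Fintype.card α - k - 1) * (Fintype.card α).choose (k + 1) := by
    have : (k : ℝ) + 2 ≤ Fintype.card α := by exact_mod_cast hk
    have : (0 : ℝ) < (Fintype.card α).choose (k + 1) := by exact_mod_cast Nat.choose_pos (by omega)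
    have : (0 : ℝ) < Fintype.card α - k - 1 := by linarith
    positivity
  have hle := layerSum_second_difference_le H hsub k
  rw [layerSum_eq_choose_mul_layerAvg H hk, layerSum_eq_choose_mul_layerAvg H (k := k) (by omega),
    layerSum_eq_choose_mul_layerAvg H (k := k + 1) (by omega)] at hle
  -- by `hcoef₀` and `hcoef₁`, the three coefficients of `hle` all equal the product in `hpos`
  refine nonpos_of_mul_nonpos_right ?_ hpos
  push_cast at hcoef₁
  linear_combination hle + layerAvg H k * (Fintype.card α - k - 1) * hcoef₀
    - layerAvg H (k + 2) * (k + 1) * hcoef₁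

end SetFunction

open SetFunction in
theorem shannon_average_concave_general (n : ℕ) (H : Finset (Fin n) → ℝ)
    (hempty : H ∅ = 0)
    (hmono : ∀ α β, α ⊆ β → H α ≤ H β)
    (hsubmod : ∀ α β, H (α ∪ β) + H (α ∩ β) ≤ H α + H β)
    (h : ℕ → ℝ)
    (hdef : ∀ m, 1 ≤ m → m ≤ n → h m = ((n.choose m : ℝ))⁻¹ *
      ∑ α ∈ powersetCard m (univ : Finset (Fin n)), H α)
    (h0 : h 0 = 0) (hn1 : h (n + 1) = h n) :
    ∀ m, 1 ≤ m → m ≤ n → h (m - 1) - 2 * h m + h (m + 1) ≤ 0 := by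
  have hlayer : ∀ j ≤ n, h j = layerAvg H j := by
    intro j hj
    rcases Nat.eq_zero_or_pos j with rfl | hj₀
    · simp [h0, layerAvg, layerSum, hempty]
    · rw [hdef j hj₀ hj, layerAvg, layerSum, Fintype.card_fin]
  rintro m hm₁ hmn
  obtain ⟨k, rfl⟩ : ∃ k, m = k + 1 := ⟨m - 1, by omega⟩
  rcases hmn.lt_or_eq with hlt | rfl
  · rw [Nat.add_sub_cancel, hlayer k (by omega), hlayer (k + 1) hmn, hlayer (k + 2) hlt]
    exact layerAvg_second_difference_nonpos H hsubmod (by rw [Fintype.card_fin]; exact hlt)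
  · rw [hn1, Nat.add_sub_cancel, hlayer k (by omega), hlayer (k + 1) le_rfl]
    linarith [layerAvg_le_succ H (fun s t => hmono s t) (k := k) (by simp)]

/-- If `H`, indexed by subsets of `{1,…,n}` with `H ∅ = 0`, satisfies the
Shannon-type inequalities (nonnegativity, monotonicity, submodularity), then its
average `h_m = C(n,m)⁻¹ Σ_{|α|=m} H α` satisfies `h_{m-1} - 2h_m + h_{m+1} ≤ 0`
for `m = 1,…,n`, with conventions `h_0 = 0`, `h_{n+1} = h_n`. -/
theorem shannon_average_concave (n : ℕ) (H : Finset (Fin n) → ℝ)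
    (hempty : H ∅ = 0)
    (hnonneg : ∀ α, 0 ≤ H α)
    (hmono : ∀ α β, α ⊆ β → H α ≤ H β)
    (hsubmod : ∀ α β, H (α ∪ β) + H (α ∩ β) ≤ H α + H β)
    (h : ℕ → ℝ)
    (hdef : ∀ m, 1 ≤ m → m ≤ n → h m = ((n.choose m : ℝ))⁻¹ *
      ∑ α ∈ powersetCard m (univ : Finset (Fin n)), H α)
    (h0 : h 0 = 0) (hn1 : h (n + 1) = h n) :
    ∀ m, 1 ≤ m → m ≤ n → h (m - 1) - 2 * h m + h (m + 1) ≤ 0 :=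
  shannon_average_concave_general n H hempty hmono hsubmod h hdef h0 hn1
end

section
/- Every vector h ∈ ℝ^n satisfying h_{m-1} − 2h_m + h_{m+1} ≤ 0 for m = 1,...,n (with h_0 = 0, h_{n+1} = h_n) is a nonnegative linear combination of the vectors v_k, k = 1,...,n, where (v_k)_m = min(m,k). -/
/-!
Take `c_k = -(h_{k-1} - 2 h_k + h_{k+1})`, nonnegative by hypothesis. Since
`min(i, k) - min(i - 1, k)` is the indicator of `i ≤ k`, summation by parts turns
`∑ c_k min(i, k)` into `∑_{j < i} (h_{j+1} - h_j) - i (h_{n+1} - h_n)`, which is `h_i` because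
`h_0 = 0` and `h_{n+1} = h_n`.
-/
open Finset Real

/-- Extend `h : Fin n → ℝ` (1-indexed as `h_1,…,h_n`) to `ℕ` with the
conventions `h_0 = 0` and `h_m = h_n` for `m > n`. -/
noncomputable def pad (n : ℕ) (h : Fin n → ℝ) : ℕ → ℝ := fun m =>
  if m = 0 then 0
  else if hm : m - 1 < n then h ⟨m - 1, hm⟩
  else if hn : n - 1 < n then h ⟨n - 1, hn⟩ else 0

/-- The cone `Φ_n` of vectors whose padded sequence has nonpositive second differences. -/
def Phi (n : ℕ) : Set (Fin n → ℝ) :=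
  {h | ∀ m, 1 ≤ m → m ≤ n → pad n h (m - 1) - 2 * pad n h m + pad n h (m + 1) ≤ 0}

/-- The second-order difference map `Θ`, with conventions `h_0 = 0`, `h_{n+1} = h_n`. -/
noncomputable def theta (n : ℕ) (h : Fin n → ℝ) : Fin n → ℝ :=
  fun i => pad n h i.val - 2 * pad n h (i.val + 1) + pad n h (i.val + 2)

lemma pad_zero (n : ℕ) (h : Fin n → ℝ) : pad n h 0 = 0 := by simp [pad]

lemma pad_succ (n : ℕ) (h : Fin n → ℝ) (j : ℕ) (hj : j < n) : pad n h (j + 1) = h ⟨j, hj⟩ := by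
  simp [pad, hj]

lemma pad_top (n : ℕ) (h : Fin n → ℝ) : pad n h (n + 1) = pad n h n := by
  rcases Nat.eq_zero_or_pos n with rfl | hn
  · simp [pad]
  · simp [pad, hn.ne', Nat.sub_lt hn one_pos]

theorem Finset.sum_Ico_sub_succ (g : ℕ → ℝ) {m n : ℕ} (h : m ≤ n) :
    ∑ k ∈ Ico m n, (g k - g (k + 1)) = g m - g n := by
  rw [← neg_sub, ← sum_Ico_sub g h, ← sum_neg_distrib]
  simp

lemma Nat.min_succ_eq_min_add_ite (i k : ℕ) :
    min (i + 1) (k + 1) = min i (k + 1) + if i ≤ k then 1 else 0 := by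
  split_ifs <;> omega

theorem sum_sub_succ_mul_min (g : ℕ → ℝ) {n i : ℕ} (hi : i ≤ n) :
    ∑ k ∈ range n, (g k - g (k + 1)) * (min i (k + 1) : ℕ) =
      ∑ j ∈ range i, g j - i * g n := by
  induction i with
  | zero => simp
  | succ i ih =>
    have tail :
        ∑ k ∈ range n, (g k - g (k + 1)) * ((if i ≤ k then 1 else 0 : ℕ) : ℝ) = g i - g n := by
      rw [← sum_Ico_sub_succ g (by omega : i ≤ n), range_eq_Ico,
        ← Ico_filter_le_of_left_le (Nat.zero_le i), sum_filter]
      refine sum_congr rfl fun k _ => ?_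
      split_ifs <;> simp
    simp only [Nat.min_succ_eq_min_add_ite, Nat.cast_add, mul_add, sum_add_distrib, ih (by omega),
      tail, sum_range_succ, Nat.cast_succ]
    ring

theorem sum_neg_secondDiff_mul_min {p : ℕ → ℝ} {n i : ℕ} (h0 : p 0 = 0) (hn : p (n + 1) = p n)
    (hi : i < n) :
    ∑ k ∈ range n, (2 * p (k + 1) - p k - p (k + 2)) * (min (i + 1) (k + 1) : ℕ) = p (i + 1) := by
  have h := sum_sub_succ_mul_min (fun k => p (k + 1) - p k) (hi : i + 1 ≤ n)
  rw [sum_range_sub, hn, h0, sub_self, mul_zero, sub_zero, sub_zero] at h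
  rw [← h]
  exact sum_congr rfl fun k _ => by ring

/-- Every `h ∈ Φ_n` is a nonnegative combination of the vectors
`v_k = (1,2,…,k,k,…,k)`, i.e. `(v_k)_m = min(m,k)` for `k = 1,…,n`. -/
theorem Phi_generated_by_min_vectors (n : ℕ) (h : Fin n → ℝ) (hh : h ∈ Phi n) :
    ∃ c : Fin n → ℝ, (∀ k, 0 ≤ c k) ∧
      ∀ i : Fin n, h i = ∑ k : Fin n, c k * (min (i.val + 1) (k.val + 1) : ℕ) := by
  set p := pad n h
  refine ⟨fun k => 2 * p (k + 1) - p k - p (k + 2), fun k => ?_, fun i => ?_⟩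
  · have hk := hh (k + 1) (by omega) k.isLt
    simp only [Nat.add_sub_cancel, add_assoc, Nat.reduceAdd] at hk
    linarith
  · rw [← pad_succ n h i i.isLt, Fin.sum_univ_eq_sum_range (fun k =>
      (2 * p (k + 1) - p k - p (k + 2)) * ((min (i + 1) (k + 1) : ℕ) : ℝ)),
      sum_neg_secondDiff_mul_min (pad_zero n h) (pad_top n h) i.isLt]
end
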